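/- arXiv:1311.1146 — 3 statements merged into one kernel-verified Lean document; each statement's English description precedes it below -/
import Mathlib

section
/- Let A be a type equipped with a Maltsev operation p : A → A → A → A, i.e., p x x y = y and p x y y = x for all x, y ∈ A. Let R and R' be equivalence relations on A, each compatible with p. Then R and R' permute: for all x, z ∈ A, (∃ y, R x y ∧ R' y z) ↔ (∃ y, R' x y ∧ R y z). -/
/-!
If `R x y` and `R' y z`, then `w = p x y z` witnesses `R' x w` and `R w z`: applying `p` to
`R' x x`, `R' y y`, `R' y z` gives `R' (p x y y) (p x y z)`, i.e. `R' x w`, and applying it to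
`R x y`, `R y y`, `R z z` gives `R (p x y z) (p y y z)`, i.e. `R w z`. Swapping the roles of
`R` and `R'` gives the converse inclusion.
-/

namespace Maltsev

variable {A : Type*} {p : A → A → A → A} {S : A → A → Prop}

def Compatible (p : A → A → A → A) (S : A → A → Prop) : Prop :=
  ∀ a a' b b' c c' : A, S a a' → S b b' → S c c' → S (p a b c) (p a' b' c')

theorem rel_left_of_rel (hp₂ : ∀ x y : A, p x y y = x) (hS : ∀ a, S a a)
    (hcompat : Compatible p S) (x : A) {y z : A} (hyz : S y z) : S x (p x y z) := by
  simpa only [hp₂] using hcompat x x y y y z (hS x) (hS y) hyz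

theorem rel_right_of_rel (hp₁ : ∀ x y : A, p x x y = y) (hS : ∀ a, S a a)
    (hcompat : Compatible p S) {x y : A} (hxy : S x y) (z : A) : S (p x y z) z := by
  simpa only [hp₁] using hcompat x y y y z z hxy (hS y) (hS z)

theorem exists_comp_swap (hp₁ : ∀ x y : A, p x x y = y) (hp₂ : ∀ x y : A, p x y y = x)
    {R R' : A → A → Prop} (hR : ∀ a, R a a) (hR' : ∀ a, R' a a)
    (hcompatR : Compatible p R) (hcompatR' : Compatible p R') {x z : A}
    (h : ∃ y, R x y ∧ R' y z) : ∃ y, R' x y ∧ R y z := by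
  obtain ⟨y, hxy, hyz⟩ := h
  exact ⟨p x y z, rel_left_of_rel hp₂ hR' hcompatR' x hyz,
    rel_right_of_rel hp₁ hR hcompatR hxy z⟩

end Maltsev

open Maltsev in
/-- Two equivalence relations compatible with a Maltsev operation permute. -/
theorem maltsev_equivalences_permute
    {A : Type*} (p : A → A → A → A)
    (hp₁ : ∀ x y : A, p x x y = y) (hp₂ : ∀ x y : A, p x y y = x)
    (R R' : A → A → Prop) (hR : Equivalence R) (hR' : Equivalence R')
    (hcompatR : ∀ a a' b b' c c' : A,
      R a a' → R b b' → R c c' → R (p a b c) (p a' b' c'))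
    (hcompatR' : ∀ a a' b b' c c' : A,
      R' a a' → R' b b' → R' c c' → R' (p a b c) (p a' b' c')) :
    ∀ x z : A, (∃ y, R x y ∧ R' y z) ↔ (∃ y, R' x y ∧ R y z) := fun _ _ =>
  ⟨exists_comp_swap hp₁ hp₂ hR.refl hR'.refl hcompatR hcompatR',
    exists_comp_swap hp₁ hp₂ hR'.refl hR.refl hcompatR' hcompatR⟩
end

section
/- Let X and Q be topological spaces, let pX : X → X → X → X be a Maltsev operation on X (pX x x y = y and pX x y y = x) which is continuous as a map X × X × X → X, let pQ : Q → Q → Q → Q be any ternary operation on Q, and let q : X → Q be a map commuting with the operations: q (pX x y z) = pQ (q x) (q y) (q z) for all x, y, z. Then for every open set U ⊆ X the set q⁻¹(q(U)) is open in X; consequently, if q is a quotient map, then q is an open map. -/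
/-! If `q x = q u`, the translation `z ↦ pX z x u` is continuous, sends `x` to `u` and preserves
the fibres of `q`. So if `u ∈ U` with `U` open, its preimage under the translation is a
neighbourhood of `x` contained in `q ⁻¹' (q '' U)`. -/

theorem map_maltsev_eq_of_map_eq {X Q : Type*} {pX : X → X → X → X} {pQ : Q → Q → Q → Q}
    {q : X → Q} (hp₂ : ∀ x y : X, pX x y y = x)
    (hq : ∀ x y z : X, q (pX x y z) = pQ (q x) (q y) (q z)) {z x u : X} (hxu : q x = q u) :
    q (pX z x u) = q z := by
  rw [hq, hxu, ← hq, hp₂]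

theorem isOpen_preimage_image_of_maltsev {X Q : Type*} [TopologicalSpace X]
    {pX : X → X → X → X} (hp₁ : ∀ x y : X, pX x x y = y)
    (hcont : ∀ x u : X, Continuous fun z => pX z x u) {q : X → Q}
    (hfibre : ∀ z x u : X, q x = q u → q (pX z x u) = q z) {U : Set X} (hU : IsOpen U) :
    IsOpen (q ⁻¹' (q '' U)) := by
  refine isOpen_iff_mem_nhds.2 fun x ⟨u, hu, hux⟩ => ?_
  have hx : x ∈ (fun z => pX z x u) ⁻¹' U := by simpa only [Set.mem_preimage, hp₁] using hu
  filter_upwards [(hU.preimage (hcont x u)).mem_nhds hx] with z hz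
  exact ⟨pX z x u, hz, hfibre z x u hux.symm⟩

/-- If `q : X → Q` commutes with a continuous Maltsev operation on `X` (and any
ternary operation on `Q`), then saturations of open sets are open; consequently
every such quotient map is open. -/
theorem maltsev_quotient_map_is_open
    {X Q : Type*} [TopologicalSpace X] [TopologicalSpace Q]
    (pX : X → X → X → X)
    (hp₁ : ∀ x y : X, pX x x y = y) (hp₂ : ∀ x y : X, pX x y y = x)
    (hpcont : Continuous fun t : X × X × X => pX t.1 t.2.1 t.2.2)
    (pQ : Q → Q → Q → Q) (q : X → Q)
    (hq : ∀ x y z : X, q (pX x y z) = pQ (q x) (q y) (q z)) :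
    (∀ U : Set X, IsOpen U → IsOpen (q ⁻¹' (q '' U))) ∧
    (Topology.IsQuotientMap q → IsOpenMap q) := by
  have hsat : ∀ U : Set X, IsOpen U → IsOpen (q ⁻¹' (q '' U)) := fun U hU =>
    isOpen_preimage_image_of_maltsev hp₁ (fun x u => hpcont.comp (Continuous.prodMk_left (x, u)))
      (fun _ _ _ hxu => map_maltsev_eq_of_map_eq hp₂ hq hxu) hU
  exact ⟨hsat, fun hquot U hU => hquot.isOpen_preimage.1 (hsat U hU)⟩
end

section
/- (Barr–Kock Theorem) Let C be a category with pullbacks. Let f : X ⟶ Y, f' : X' ⟶ Y', g : X ⟶ X', h : Y ⟶ Y' be morphisms with h ∘ f = f' ∘ g. Let (R, π₁, π₂) and (R', π₁', π₂') be the kernel pairs of f and f' respectively, and let γ : R ⟶ R' be the induced morphism satisfying π₁' ∘ γ = g ∘ π₁ and π₂' ∘ γ = g ∘ π₂. Assume that the square with sides γ, π₁, π₁', g is a pullback, and that f is a strong epimorphism all of whose pullbacks along arbitrary morphisms are strong epimorphisms. Then: (1) the square with sides f, g, h, f' is a pullback; (2) if moreover g is a monomorphism, then h is a monomorphism. -/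
/-!
Let `t : X ⟶ pullback h f'` be the comparison map of the square. Pasting the kernel pair of
`f'` to the pullback square `(γ, π₁, π₁', g)` shows that `π₂ ≫ t` is the base change of `f`
along `pullback.fst h f'`, hence a strong epimorphism, so `t` is one as well. On the other hand
`f` and `g` are jointly monic, because a map into the kernel pair of `f` is determined by its
composites with `γ` and `π₁`; so `t` is a monomorphism, hence an isomorphism. For the second
part, an equation `a ≫ h = b ≫ h` is tested after pulling `f` back along `a`.
-/

open CategoryTheory CategoryTheory.Limits

namespace CategoryTheory

variable {C : Type*} [Category C]

theorem strongEpi_of_isPullback_of_stable [HasPullbacks C] {X Y W P : C} {f : X ⟶ Y}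
    (hstab : ∀ {W : C} (u : W ⟶ Y), StrongEpi (pullback.snd f u))
    {fst : P ⟶ X} {snd : P ⟶ W} {u : W ⟶ Y} (sq : IsPullback fst snd f u) : StrongEpi snd := by
  have := hstab u
  rw [← sq.isoPullback_hom_snd]
  exact strongEpi_comp _ _

theorem eq_of_isPullback_kernelPair_map {X X' Y Y' Z : C} {f : X ⟶ Y} {f' : X' ⟶ Y'}
    {g : X ⟶ X'} [HasPullback f f] [HasPullback f' f'] {γ : pullback f f ⟶ pullback f' f'}
    (hγ₁ : γ ≫ pullback.fst f' f' = pullback.fst f f ≫ g)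
    (hγ₂ : γ ≫ pullback.snd f' f' = pullback.snd f f ≫ g)
    (hpb : IsPullback γ (pullback.fst f f) (pullback.fst f' f') g)
    {a b : Z ⟶ X} (haf : a ≫ f = b ≫ f) (hag : a ≫ g = b ≫ g) : a = b := by
  have hdiag : pullback.lift a a rfl = pullback.lift a b haf := by
    apply hpb.hom_ext
    · apply pullback.hom_ext
      · simp only [Category.assoc, hγ₁, pullback.lift_fst_assoc]
      · simp only [Category.assoc, hγ₂, pullback.lift_snd_assoc, hag]
    · simp only [pullback.lift_fst]
  simpa only [pullback.lift_snd] using hdiag =≫ pullback.snd f f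

theorem isPullback_kernelPair_comparison {X X' Y Y' : C} {f : X ⟶ Y} {f' : X' ⟶ Y'}
    {g : X ⟶ X'} {h : Y ⟶ Y'} [HasPullback f f] [HasPullback f' f'] [HasPullback h f']
    (hcomm : f ≫ h = g ≫ f') {γ : pullback f f ⟶ pullback f' f'}
    (hγ₂ : γ ≫ pullback.snd f' f' = pullback.snd f f ≫ g)
    (hpb : IsPullback γ (pullback.fst f f) (pullback.fst f' f') g) :
    IsPullback (pullback.snd f f ≫ pullback.lift f g hcomm) (pullback.fst f f)
      (pullback.fst h f') f := by
  refine IsPullback.of_right ?_ ?_ (IsPullback.of_hasPullback h f').flip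
  · simpa only [Category.assoc, pullback.lift_snd, ← hγ₂, hcomm] using
      hpb.paste_horiz (IsPullback.of_hasPullback f' f').flip
  · simp only [Category.assoc, pullback.lift_fst, pullback.condition]

theorem mono_of_isPullback_of_mono [HasPullbacks C] {X X' Y Y' : C} {f : X ⟶ Y}
    {f' : X' ⟶ Y'} {g : X ⟶ X'} {h : Y ⟶ Y'} (sq : IsPullback f g h f')
    (hstab : ∀ {W : C} (u : W ⟶ Y), Epi (pullback.snd f u)) [Mono g] : Mono h := by
  refine ⟨fun {Z} a b hab => ?_⟩
  have w : (pullback.snd f a ≫ b) ≫ h = (pullback.fst f a ≫ g) ≫ f' := by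
    rw [Category.assoc, ← hab, ← pullback.condition_assoc, Category.assoc, sq.w]
  have hlift : sq.lift _ _ w = pullback.fst f a := by
    rw [← cancel_mono g, sq.lift_snd]
  rw [← cancel_epi (pullback.snd f a), ← pullback.condition, ← hlift, sq.lift_fst]

end CategoryTheory

theorem barr_kock_general
    {C : Type*} [Category C] [HasPullbacks C]
    {X Y X' Y' : C} (f : X ⟶ Y) (f' : X' ⟶ Y') (g : X ⟶ X') (h : Y ⟶ Y')
    (hcomm : f ≫ h = g ≫ f')
    (γ : pullback f f ⟶ pullback f' f')
    (hγ₁ : γ ≫ pullback.fst f' f' = pullback.fst f f ≫ g)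
    (hγ₂ : γ ≫ pullback.snd f' f' = pullback.snd f f ≫ g)
    (hpb : IsPullback γ (pullback.fst f f) (pullback.fst f' f') g)
    (hstab : ∀ {W : C} (u : W ⟶ Y), StrongEpi (pullback.snd f u)) :
    IsPullback f g h f' ∧ (Mono g → Mono h) := by
  let t : X ⟶ pullback h f' := pullback.lift f g hcomm
  have : StrongEpi (pullback.snd f f ≫ t) :=
    strongEpi_of_isPullback_of_stable hstab (isPullback_kernelPair_comparison hcomm hγ₂ hpb).flip
  have : StrongEpi t := strongEpi_of_strongEpi (pullback.snd f f) t
  have : Mono t := ⟨fun a b hab => eq_of_isPullback_kernelPair_map hγ₁ hγ₂ hpb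
    (by simpa only [t, Category.assoc, pullback.lift_fst] using hab =≫ pullback.fst h f')
    (by simpa only [t, Category.assoc, pullback.lift_snd] using hab =≫ pullback.snd h f')⟩
  have : IsIso t := isIso_of_mono_of_strongEpi t
  have sq : IsPullback f g h f' :=
    IsPullback.of_iso_pullback ⟨hcomm⟩ (asIso t) (pullback.lift_fst _ _ _) (pullback.lift_snd _ _ _)
  exact ⟨sq, fun _ => mono_of_isPullback_of_mono sq fun u => (hstab u).epi⟩

/-- Barr–Kock theorem: given a commutative square `h ∘ f = f' ∘ g` and the induced
morphism `γ` between the kernel pairs of `f` and `f'`, if the square `(γ, π₁, π₁', g)`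
is a pullback and `f` is a pullback-stable strong epimorphism, then the original
square is a pullback; if moreover `g` is a monomorphism, so is `h`. -/
theorem barr_kock
    {C : Type*} [Category C] [HasPullbacks C]
    {X Y X' Y' : C} (f : X ⟶ Y) (f' : X' ⟶ Y') (g : X ⟶ X') (h : Y ⟶ Y')
    (hcomm : f ≫ h = g ≫ f')
    (γ : pullback f f ⟶ pullback f' f')
    (hγ₁ : γ ≫ pullback.fst f' f' = pullback.fst f f ≫ g)
    (hγ₂ : γ ≫ pullback.snd f' f' = pullback.snd f f ≫ g)
    (hpb : IsPullback γ (pullback.fst f f) (pullback.fst f' f') g)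
    (hstrong : StrongEpi f)
    (hstab : ∀ {W : C} (u : W ⟶ Y), StrongEpi (pullback.snd f u)) :
    IsPullback f g h f' ∧ (Mono g → Mono h) :=
  barr_kock_general f f' g h hcomm γ hγ₁ hγ₂ hpb hstab
end
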